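/- arXiv:2201.10964 — 8 statements merged into one kernel-verified Lean document; each statement's English description precedes it below -/
import Mathlib

section
/- Let f be a polynomial in ℂ[x] with deg f ≥ 1. Then every solution (n, m, p, q) of the Pillai equation p^n − q^m = f, where n, m ≥ 2 are integers and p, q ∈ ℂ[x] are polynomials with deg p ≥ 1 and deg q ≥ 1, satisfies max{n, m, deg p, deg q} ≤ 4 + 12·deg f + 8·(deg f)². -/
open Polynomial UniqueFactorizationMonoid

/-! If `deg p^n ≠ deg q^m`, both are at most `deg f`. Otherwise `N = n deg p = m deg q > deg f`,
and Mason–Stothers applied to `p^n - q^m = f`, after cancelling `gcd(p^n, q^m)` (which divides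
`f`), gives `N < deg p + deg q + deg f = N/n + N/m + deg f`. As `1/n + 1/m ≤ 5/6` unless
`n = m = 2`, this forces `N < 6 deg f`; for `n = m = 2` use `f = (p - q)(p + q)` instead. -/

namespace Polynomial

variable {k : Type*} [Field k]

theorem natDegree_le_of_sq_sub_sq_eq [NeZero (2 : k)] {p q f : k[X]} (h : p ^ 2 - q ^ 2 = f)
    (hf : f ≠ 0) : p.natDegree ≤ f.natDegree := by
  have hfac : (p - q) * (p + q) = f := by rw [← h]; ring
  have hsum : (p - q).natDegree + (p + q).natDegree = f.natDegree := by
    rw [← natDegree_mul (left_ne_zero_of_mul (hfac ▸ hf)) (right_ne_zero_of_mul (hfac ▸ hf)),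
      hfac]
  calc p.natDegree = (C (2⁻¹ : k) * ((p - q) + (p + q))).natDegree := by
        rw [show (p - q) + (p + q) = C 2 * p by rw [map_ofNat]; ring, ← mul_assoc, ← C_mul,
          inv_mul_cancel₀ two_ne_zero, C_1, one_mul]
    _ ≤ ((p - q) + (p + q)).natDegree := natDegree_C_mul_le _ _
    _ ≤ max (p - q).natDegree (p + q).natDegree := natDegree_add_le _ _
    _ ≤ f.natDegree := by omega

variable [DecidableEq k]

theorem natDegree_lt_radical_add_of_isCoprime [CharZero k] {a b : k[X]} (hab : IsCoprime a b)
    (ha : 0 < a.natDegree) (hc : a - b ≠ 0) :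
    a.natDegree < (radical a).natDegree + (radical b).natDegree + (a - b).natDegree := by
  have ha0 : a ≠ 0 := ne_zero_of_natDegree_gt ha
  have hb0 : b ≠ 0 := by
    rintro rfl
    exact ha.ne' (natDegree_eq_zero_of_isUnit (isCoprime_zero_right.mp hab))
  rcases Polynomial.abc ha0 (neg_ne_zero.mpr hb0) (neg_ne_zero.mpr hc) hab.neg_right
    (by ring) with ⟨hA, -, -⟩ | ⟨hda, -, -⟩
  · have hrad : (radical (a * -b * -(a - b))).natDegree ≤
        (radical a).natDegree + (radical b).natDegree + (radical (a - b)).natDegree := by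
      rw [show a * -b * -(a - b) = a * b * (a - b) by ring, ← natDegree_mul radical_ne_zero
        radical_ne_zero, ← natDegree_mul (mul_ne_zero radical_ne_zero radical_ne_zero)
        radical_ne_zero]
      exact natDegree_le_of_dvd (radical_mul_dvd.trans (mul_dvd_mul_right radical_mul_dvd _))
        (mul_ne_zero (mul_ne_zero radical_ne_zero radical_ne_zero) radical_ne_zero)
    have := natDegree_radical_le (a := a - b)
    omega
  · rw [eq_C_of_derivative_eq_zero hda, natDegree_C] at ha
    exact absurd ha (lt_irrefl 0)

theorem natDegree_lt_radical_add_of_sub_eq [CharZero k] {u v f : k[X]} (h : u - v = f)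
    (hf : f ≠ 0) (hdeg : f.natDegree < u.natDegree) :
    u.natDegree < (radical u).natDegree + (radical v).natDegree + f.natDegree := by
  obtain ⟨a, b, hu, hv, hgcd⟩ := extract_gcd u v
  set g := gcd u v
  have hgc : g * (a - b) = f := by rw [mul_sub, ← hu, ← hv, h]
  have hg0 : g ≠ 0 := left_ne_zero_of_mul (hgc ▸ hf)
  have hc0 : a - b ≠ 0 := right_ne_zero_of_mul (hgc ▸ hf)
  have ha0 : a ≠ 0 := by rintro rfl; simp_all
  have hb0 : b ≠ 0 := by rintro rfl; simp_all
  have hdu : u.natDegree = g.natDegree + a.natDegree := by rw [hu, natDegree_mul hg0 ha0]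
  have hdf : f.natDegree = g.natDegree + (a - b).natDegree := by
    rw [← hgc, natDegree_mul hg0 hc0]
  have hMS := natDegree_lt_radical_add_of_isCoprime ((gcd_isUnit_iff a b).mp hgcd) (by omega) hc0
  have hra : (radical a).natDegree ≤ (radical u).natDegree :=
    natDegree_le_of_dvd (radical_dvd_radical (hu ▸ dvd_mul_left a g) (hu ▸ mul_ne_zero hg0 ha0))
      radical_ne_zero
  have hrb : (radical b).natDegree ≤ (radical v).natDegree :=
    natDegree_le_of_dvd (radical_dvd_radical (hv ▸ dvd_mul_left b g) (hv ▸ mul_ne_zero hg0 hb0))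
      radical_ne_zero
  omega

theorem mul_natDegree_le_of_pow_sub_pow_eq [CharZero k] {p q f : k[X]} {n m : ℕ} (hn : 2 ≤ n)
    (hm : 2 ≤ m) (h : p ^ n - q ^ m = f) (hf : f ≠ 0) :
    n * p.natDegree ≤ 6 * f.natDegree := by
  by_cases hle : n * p.natDegree ≤ f.natDegree
  · omega
  have hlt : f.natDegree < (p ^ n).natDegree := by rw [natDegree_pow]; omega
  have hdeg : m * q.natDegree = n * p.natDegree := by
    rw [← natDegree_pow, ← natDegree_pow, show q ^ m = p ^ n - f by rw [← h]; ring,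
      natDegree_sub_eq_left_of_natDegree_lt hlt]
  have hMS : n * p.natDegree < p.natDegree + q.natDegree + f.natDegree := by
    have := natDegree_lt_radical_add_of_sub_eq h hf hlt
    rw [radical_pow p (by omega), radical_pow q (by omega), natDegree_pow] at this
    have := natDegree_radical_le (a := p)
    have := natDegree_radical_le (a := q)
    omega
  by_cases h22 : n = 2 ∧ m = 2
  · obtain ⟨rfl, rfl⟩ := h22
    have := natDegree_le_of_sq_sub_sq_eq h hf
    omega
  rcases (by omega : 3 ≤ n ∨ 3 ≤ m) with h3 | h3
  · have := Nat.mul_le_mul_right p.natDegree h3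
    have := Nat.mul_le_mul_right q.natDegree hm
    omega
  · have := Nat.mul_le_mul_right q.natDegree h3
    have := Nat.mul_le_mul_right p.natDegree hn
    omega

end Polynomial

theorem pillai_polynomial_bound (f p q : ℂ[X]) (n m : ℕ)
    (hf : 1 ≤ f.natDegree) (hn : 2 ≤ n) (hm : 2 ≤ m)
    (hp : 1 ≤ p.natDegree) (hq : 1 ≤ q.natDegree)
    (heq : p ^ n - q ^ m = f) :
    max (max n m) (max p.natDegree q.natDegree) ≤
      4 + 12 * f.natDegree + 8 * f.natDegree ^ 2 := by
  have hf0 : f ≠ 0 := ne_zero_of_natDegree_gt hf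
  have hP := mul_natDegree_le_of_pow_sub_pow_eq hn hm heq hf0
  have hQ := mul_natDegree_le_of_pow_sub_pow_eq hm hn (by rw [← heq]; ring : q ^ m - p ^ n = -f)
    (neg_ne_zero.mpr hf0)
  rw [natDegree_neg] at hQ
  have := Nat.le_mul_of_pos_right n hp
  have := Nat.le_mul_of_pos_right m hq
  have := Nat.le_mul_of_pos_left p.natDegree (by omega : 0 < n)
  have := Nat.le_mul_of_pos_left q.natDegree (by omega : 0 < m)
  simp only [max_le_iff]
  omega
end

section
/- Let f ∈ ℂ* be a non-zero constant. Then there is no vector (n, m, p, q) with integers n, m ≥ 2 and polynomials p, q ∈ ℂ[x] with deg p ≥ 1 and deg q ≥ 1 satisfying p^n − q^m = f. -/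
/-!
Differentiating `p ^ n - q ^ m = f` gives `n p^(n-1) p' = m q^(m-1) q'`. Since `p ^ n - q ^ m` is a
unit, `p` and `q` are coprime, so `p ∣ q'` and `q ∣ p'`; as `p'` and `q'` are nonzero this forces
`deg p < deg q < deg p`.
-/

open Polynomial

theorem isCoprime_of_isUnit_sub {R : Type*} [CommRing R] {a b : R} (h : IsUnit (a - b)) :
    IsCoprime a b :=
  ⟨↑h.unit⁻¹, -↑h.unit⁻¹, by rw [neg_mul, ← sub_eq_add_neg, ← mul_sub, h.val_inv_mul]⟩

namespace Polynomial

theorem natDegree_lt_of_dvd_derivative {R : Type*} [CommRing R] [IsDomain R] [CharZero R]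
    {p q : R[X]} (hq : q.natDegree ≠ 0) (h : p ∣ derivative q) : p.natDegree < q.natDegree :=
  (natDegree_le_of_dvd h (derivative_ne_zero.mpr hq)).trans_lt (natDegree_derivative_lt hq)

theorem dvd_derivative_of_derivative_pow_eq {K : Type*} [Field K] [CharZero K] {p q : K[X]}
    {n m : ℕ} (hpq : IsCoprime p q) (hn : 2 ≤ n) (hm : m ≠ 0)
    (h : derivative (p ^ n) = derivative (q ^ m)) : p ∣ derivative q := by
  have hdvd : p ^ (n - 1) ∣ q ^ (m - 1) * (C (m : K) * derivative q) := by
    refine ⟨C (n : K) * derivative p, ?_⟩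
    rw [mul_left_comm, ← mul_assoc, ← derivative_pow, ← h, derivative_pow]
    ring
  have hdvd' : p ^ (n - 1) ∣ derivative q :=
    (isUnit_C.mpr (Nat.cast_ne_zero.mpr hm).isUnit).dvd_mul_left.mp
      ((hpq.pow (m := n - 1) (n := m - 1)).dvd_of_dvd_mul_left hdvd)
  exact (dvd_pow_self p (by omega)).trans hdvd'

end Polynomial

theorem pillai_no_solution_constant (f : ℂ) (hf : f ≠ 0) :
    ¬ ∃ (n m : ℕ) (p q : ℂ[X]), 2 ≤ n ∧ 2 ≤ m ∧
      1 ≤ p.natDegree ∧ 1 ≤ q.natDegree ∧ p ^ n - q ^ m = C f := by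
  rintro ⟨n, m, p, q, hn, hm, hp, hq, heq⟩
  have hcop : IsCoprime p q :=
    (IsCoprime.pow_iff (by omega) (by omega)).mp
      (isCoprime_of_isUnit_sub (heq ▸ isUnit_C.mpr hf.isUnit))
  have hder : derivative (p ^ n) = derivative (q ^ m) := by
    rw [← sub_eq_zero, ← derivative_sub, heq, derivative_C]
  have hpq := natDegree_lt_of_dvd_derivative (by omega)
    (dvd_derivative_of_derivative_pow_eq hcop hn (by omega) hder)
  have hqp := natDegree_lt_of_dvd_derivative (by omega)
    (dvd_derivative_of_derivative_pow_eq hcop.symm hm (by omega) hder.symm)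
  omega
end

section
/- Let f ∈ ℂ[x] with deg f ≥ 1 and suppose p^n − q^m = f for integers n, m ≥ 2 and polynomials p, q ∈ ℂ[x] with deg p ≥ 1 and deg q ≥ 1. Then n · deg p ≤ 1 + 2·deg f + deg p + deg q. -/
/-!
Let `W` be the Wronskian `p^n f' - (p^n)' f`, which equals `q^m f' - (q^m)' f` because
`p^n = q^m + f`. If `W = 0`, comparing leading coefficients forces `n deg p ≤ deg f`.
Otherwise `p^(n-1)` and `q^(m-1)` both divide `W`, so their lcm does, while their gcd divides
`f`; hence `(n-1) deg p + (m-1) deg q ≤ deg W + deg f < m deg q + 2 deg f`.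
-/

open Polynomial

namespace Polynomial

theorem pow_sub_one_dvd_wronskian_left {R : Type*} [CommRing R] (a b : R[X]) (k : ℕ) :
    a ^ (k - 1) ∣ wronskian (a ^ k) b := by
  rw [wronskian, derivative_pow]
  exact dvd_sub ((pow_dvd_pow a (k.sub_le 1)).mul_right _)
    (((dvd_mul_left _ _).mul_right _).mul_right _)

theorem natDegree_le_of_wronskian_eq_zero {R : Type*} [CommRing R] [IsDomain R] [CharZero R]
    {a b : R[X]} (hb : b ≠ 0) (hw : wronskian a b = 0) : a.natDegree ≤ b.natDegree := by
  rcases eq_or_ne a 0 with rfl | ha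
  · simp
  -- Leading coefficients of `a b' = a' b` give `deg b · lc a · lc b = deg a · lc a · lc b`.
  have hlc := congrArg leadingCoeff (sub_eq_zero.mp hw)
  simp only [leadingCoeff_mul, leadingCoeff_derivative] at hlc
  have hdeg : (b.natDegree : R) = a.natDegree := by
    refine mul_left_cancel₀ (mul_ne_zero (leadingCoeff_ne_zero.mpr ha)
      (leadingCoeff_ne_zero.mpr hb)) ?_
    linear_combination hlc
  exact (Nat.cast_injective hdeg).ge

theorem natDegree_add_natDegree_le_of_dvd {K : Type*} [Field K] [DecidableEq K] {a b c : K[X]}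
    (ha : a ∣ c) (hb : b ∣ c) (hc : c ≠ 0) :
    a.natDegree + b.natDegree ≤ c.natDegree + (gcd a b).natDegree := by
  have ha0 : a ≠ 0 := ne_zero_of_dvd_ne_zero hc ha
  have hb0 : b ≠ 0 := ne_zero_of_dvd_ne_zero hc hb
  have hgcd_lcm : (gcd a b * lcm a b).natDegree = (a * b).natDegree :=
    natDegree_eq_of_degree_eq (degree_eq_degree_of_associated (gcd_mul_lcm a b))
  rw [natDegree_mul (gcd_ne_zero_of_left ha0) (lcm_ne_zero_iff.mpr ⟨ha0, hb0⟩),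
    natDegree_mul ha0 hb0] at hgcd_lcm
  have hlcm := natDegree_le_of_dvd (lcm_dvd ha hb) hc
  omega

end Polynomial

theorem pillai_ndegp_bound_general (f p q : ℂ[X]) (n m : ℕ)
    (hf : 1 ≤ f.natDegree)
    (heq : p ^ n - q ^ m = f) :
    n * p.natDegree ≤ 1 + 2 * f.natDegree + p.natDegree + q.natDegree := by
  have hf0 : f ≠ 0 := ne_zero_of_natDegree_gt hf
  have hW : wronskian (p ^ n) f = wronskian (q ^ m) f := by
    rw [← sub_add_cancel (p ^ n) (q ^ m), heq, wronskian_add_left, wronskian_self_eq_zero,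
      zero_add]
  by_cases hW0 : wronskian (q ^ m) f = 0
  · have hdeg := natDegree_le_of_wronskian_eq_zero hf0 (hW ▸ hW0)
    rw [natDegree_pow] at hdeg
    omega
  have hgcd : gcd (p ^ (n - 1)) (q ^ (m - 1)) ∣ f := heq ▸ dvd_sub
    ((gcd_dvd_left _ _).trans (pow_dvd_pow p (n.sub_le 1)))
    ((gcd_dvd_right _ _).trans (pow_dvd_pow q (m.sub_le 1)))
  have hdvd := natDegree_add_natDegree_le_of_dvd (hW ▸ pow_sub_one_dvd_wronskian_left p f n)
    (pow_sub_one_dvd_wronskian_left q f m) hW0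
  have hW_lt := natDegree_wronskian_lt_add hW0
  have hgcd_deg := natDegree_le_of_dvd hgcd hf0
  simp only [natDegree_pow, Nat.sub_one_mul] at hdvd hW_lt
  omega

theorem pillai_ndegp_bound (f p q : ℂ[X]) (n m : ℕ)
    (hf : 1 ≤ f.natDegree) (hn : 2 ≤ n) (hm : 2 ≤ m)
    (hp : 1 ≤ p.natDegree) (hq : 1 ≤ q.natDegree)
    (heq : p ^ n - q ^ m = f) :
    n * p.natDegree ≤ 1 + 2 * f.natDegree + p.natDegree + q.natDegree :=
  pillai_ndegp_bound_general f p q n m hf heq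
end

section
/- Let f ∈ ℂ[x] with deg f ≥ 1 and suppose p^n − q^m = f for integers n, m ≥ 2 and polynomials p, q ∈ ℂ[x] with deg p ≥ 1 and deg q ≥ 1. Then m · deg q ≤ 1 + 2·deg f + deg p + deg q. -/
/-!
Differentiating `p ^ n - q ^ m = f` and eliminating `p ^ n` gives
`q ^ (m - 1) * (n q p' - m p q') = p f' - n f p'`. If the right-hand side is nonzero, it is a
multiple of `q ^ (m - 1)` of degree at most `deg p + deg f`. If it vanishes, comparing leading
coefficients gives `deg f = n deg p`, and then `m deg q = deg (p ^ n - f) ≤ deg f`.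
-/

open Polynomial

namespace Polynomial

variable {R : Type*} [CommRing R]

theorem pow_sub_one_mul_eq_of_pow_sub_pow_eq {p q f : R[X]} {n m : ℕ} (hm : m ≠ 0)
    (h : p ^ n - q ^ m = f) :
    q ^ (m - 1) * (C (n : R) * q * derivative p - C (m : R) * p * derivative q) =
      p * derivative f - C (n : R) * f * derivative p := by
  obtain ⟨m, rfl⟩ := Nat.exists_eq_add_one_of_ne_zero hm
  subst h
  rcases n with _ | n
  · simp only [derivative_sub, derivative_pow, Nat.cast_zero, map_zero]
    ring
  · simp only [derivative_sub, derivative_pow, Nat.add_sub_cancel]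
    ring

theorem natDegree_eq_mul_of_mul_derivative_eq [IsDomain R] [IsAddTorsionFree R]
    {p f : R[X]} {c : R} (hp : p ≠ 0) (hf : f ≠ 0)
    (h : p * derivative f = C c * f * derivative p) :
    (f.natDegree : R) = c * p.natDegree := by
  have hlc := congrArg leadingCoeff h
  simp only [leadingCoeff_mul, leadingCoeff_C, leadingCoeff_derivative] at hlc
  have hne : p.leadingCoeff * f.leadingCoeff ≠ 0 := by simp [hp, hf]
  apply mul_left_cancel₀ hne
  linear_combination hlc

theorem natDegree_mul_derivative_sub_le (p f : R[X]) (c : R) :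
    (p * derivative f - C c * f * derivative p).natDegree ≤ p.natDegree + f.natDegree := by
  refine (natDegree_sub_le _ _).trans (max_le ?_ ?_)
  · grw [natDegree_mul_le, natDegree_derivative_le]
    omega
  · grw [natDegree_mul_le, natDegree_C_mul_le, natDegree_derivative_le]
    omega

end Polynomial

theorem pillai_mdegq_bound_general (f p q : ℂ[X]) (n m : ℕ)
    (hf : 1 ≤ f.natDegree) (hm : 2 ≤ m)
    (hp : 1 ≤ p.natDegree)
    (heq : p ^ n - q ^ m = f) :
    m * q.natDegree ≤ 1 + 2 * f.natDegree + p.natDegree + q.natDegree := by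
  have key := pow_sub_one_mul_eq_of_pow_sub_pow_eq (by omega) heq
  by_cases hW : p * derivative f - C (n : ℂ) * f * derivative p = 0
  · have hdeg : f.natDegree = n * p.natDegree := by
      exact_mod_cast natDegree_eq_mul_of_mul_derivative_eq (ne_zero_of_natDegree_gt hp)
        (ne_zero_of_natDegree_gt hf) (sub_eq_zero.mp hW)
    have : m * q.natDegree ≤ f.natDegree := by
      rw [← natDegree_pow, ← sub_sub_cancel (p ^ n) (q ^ m), heq]
      grw [natDegree_sub_le, natDegree_pow]
      omega
    omega
  · have := (natDegree_le_of_dvd ⟨_, key.symm⟩ hW).trans (natDegree_mul_derivative_sub_le p f _)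
    rw [natDegree_pow, Nat.sub_one_mul] at this
    omega

theorem pillai_mdegq_bound (f p q : ℂ[X]) (n m : ℕ)
    (hf : 1 ≤ f.natDegree) (hn : 2 ≤ n) (hm : 2 ≤ m)
    (hp : 1 ≤ p.natDegree) (hq : 1 ≤ q.natDegree)
    (heq : p ^ n - q ^ m = f) :
    m * q.natDegree ≤ 1 + 2 * f.natDegree + p.natDegree + q.natDegree :=
  pillai_mdegq_bound_general f p q n m hf hm hp heq
end

section
/- Let f ∈ ℂ[x] with deg f ≥ 1 and suppose p^n − q^m = f for integers n ≥ 3 and m ≥ 2 and polynomials p, q ∈ ℂ[x] with deg p ≥ deg q ≥ 1. Then deg p ≤ 1 + 2·deg f and n ≤ 3 + 2·deg f. -/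
/-!
Divide out `g = gcd(q^m, f)`: writing `p^n = g u`, `q^m = g v`, `f = g w` gives a coprime relation
`u = v + w`, to which Mason–Stothers applies (in its degenerate case `u` is constant). Since
`rad u ∣ rad p`, `rad v ∣ rad q` and `deg w = deg f - deg g`, this yields
`n deg p ≤ deg p + deg q + deg f ≤ 2 deg p + deg f`, so `(n - 2) deg p ≤ deg f`.
-/

open Polynomial UniqueFactorizationMonoid UniqueFactorizationDomain

namespace Polynomial

variable {k : Type*} [Field k] [DecidableEq k]

theorem natDegree_radical_le_of_dvd {a b : k[X]} (h : a ∣ b) (hb : b ≠ 0) :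
    (radical a).natDegree ≤ (radical b).natDegree :=
  natDegree_le_of_dvd (radical_dvd_radical h hb) radical_ne_zero

theorem natDegree_radical_pow_le (a : k[X]) (n : ℕ) : (radical (a ^ n)).natDegree ≤ a.natDegree :=
  (natDegree_le_of_dvd radical_pow_dvd radical_ne_zero).trans natDegree_radical_le

variable [CharZero k]

theorem natDegree_le_natDegree_radical_add_of_isCoprime {a b c : k[X]} (ha : a ≠ 0) (hb : b ≠ 0)
    (hc : c ≠ 0) (hbc : IsCoprime b c) (h : a = b + c) :
    a.natDegree ≤ (radical a).natDegree + (radical b).natDegree + (radical c).natDegree := by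
  rcases Polynomial.abc hb hc (neg_ne_zero.2 ha) hbc (by rw [h]; ring) with ⟨-, -, habc⟩ | ⟨-, -, hderiv⟩
  · have hrad : radical (b * c * -a) ∣ radical a * radical b * radical c := by
      rw [mul_neg, radical_neg, mul_comm, ← mul_assoc]
      exact radical_mul_dvd.trans (mul_dvd_mul_right radical_mul_dvd _)
    have := natDegree_le_of_dvd hrad (by simp [radical_ne_zero])
    rw [natDegree_neg] at habc
    rw [natDegree_mul (by simp [radical_ne_zero]) radical_ne_zero,
      natDegree_mul radical_ne_zero radical_ne_zero] at this
    omega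
  · rw [derivative_neg, neg_eq_zero] at hderiv
    simp [derivative_eq_zero.1 hderiv]

theorem natDegree_le_natDegree_radical_add {a b c : k[X]} (ha : a ≠ 0) (hb : b ≠ 0) (hc : c ≠ 0)
    (h : a = b + c) : a.natDegree ≤ (radical a).natDegree + (radical b).natDegree + c.natDegree := by
  obtain ⟨v, w, hbv, hcw, hunit⟩ := extract_gcd b c
  set g := gcd b c
  have hg : g ≠ 0 := gcd_ne_zero_of_left hb
  have hv : v ≠ 0 := by rintro rfl; simp [hbv] at hb
  have hw : w ≠ 0 := by rintro rfl; simp [hcw] at hc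
  have hau : a = g * (v + w) := by rw [h, hbv, hcw, mul_add]
  have hu : v + w ≠ 0 := by rintro hu; simp [hau, hu] at ha
  have hvw : IsCoprime v w := (gcd_isUnit_iff_isRelPrime.1 hunit).isCoprime
  have hmason := natDegree_le_natDegree_radical_add_of_isCoprime hu hv hw hvw rfl
  have hradu := natDegree_radical_le_of_dvd (Dvd.intro_left g hau.symm) ha
  have hradv := natDegree_radical_le_of_dvd (Dvd.intro_left g hbv.symm) hb
  have hradw : (radical w).natDegree ≤ w.natDegree := natDegree_radical_le
  have hdega : a.natDegree = g.natDegree + (v + w).natDegree := by rw [hau, natDegree_mul hg hu]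
  have hdegc : c.natDegree = g.natDegree + w.natDegree := by rw [hcw, natDegree_mul hg hw]
  omega

end Polynomial

theorem pillai_case_n_ge_three_general (f p q : ℂ[X]) (n m : ℕ)
    (hf : 1 ≤ f.natDegree) (hn : 3 ≤ n)
    (hq : 1 ≤ q.natDegree) (hpq : q.natDegree ≤ p.natDegree)
    (heq : p ^ n - q ^ m = f) :
    p.natDegree ≤ 1 + 2 * f.natDegree ∧ n ≤ 3 + 2 * f.natDegree := by
  have hq0 : q ≠ 0 := ne_zero_of_natDegree_gt hq
  have hp0 : p ≠ 0 := ne_zero_of_natDegree_gt (hq.trans hpq)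
  have hf0 : f ≠ 0 := ne_zero_of_natDegree_gt hf
  have hmason := natDegree_le_natDegree_radical_add (pow_ne_zero n hp0) (pow_ne_zero m hq0) hf0
    (eq_add_of_sub_eq' heq)
  rw [natDegree_pow] at hmason
  have hradp := natDegree_radical_pow_le p n
  have hradq := natDegree_radical_pow_le q m
  obtain ⟨k, rfl⟩ : ∃ k, n = k + 3 := ⟨n - 3, by omega⟩
  constructor <;> nlinarith

theorem pillai_case_n_ge_three (f p q : ℂ[X]) (n m : ℕ)
    (hf : 1 ≤ f.natDegree) (hn : 3 ≤ n) (hm : 2 ≤ m)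
    (hq : 1 ≤ q.natDegree) (hpq : q.natDegree ≤ p.natDegree)
    (heq : p ^ n - q ^ m = f) :
    p.natDegree ≤ 1 + 2 * f.natDegree ∧ n ≤ 3 + 2 * f.natDegree :=
  pillai_case_n_ge_three_general f p q n m hf hn hq hpq heq
end

section
/- Let f ∈ ℂ[x] with deg f ≥ 1 and suppose p^n − q^m = f for integers n ≥ 3 and m ≥ 2 and polynomials p, q ∈ ℂ[x] with deg p ≥ deg q ≥ 1. Then m · deg q ≤ 3 + 8·deg f + 4·(deg f)². -/
/-!
If `n deg p ≠ m deg q`, then `deg f = max (n deg p) (m deg q) ≥ m deg q`. Otherwise the leading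
terms cancel, and Mason–Stothers, applied after dividing `p ^ n` and `q ^ m` by their gcd (which
divides `f`), gives `m deg q < deg f + deg rad (p ^ n q ^ m f) ≤ deg p + deg q + 2 deg f`. Since
`deg p ≤ m deg q / 3` and `deg q ≤ m deg q / 2`, this forces `m deg q < 12 deg f`.
-/

open Polynomial UniqueFactorizationMonoid

namespace Polynomial

variable {k : Type*} [Field k] [DecidableEq k]

theorem natDegree_le_natDegree_sub_of_natDegree_ne {R : Type*} [Ring R] {a b : R[X]}
    (h : a.natDegree ≠ b.natDegree) : b.natDegree ≤ (a - b).natDegree := by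
  rcases h.lt_or_gt with h | h
  · rw [natDegree_sub_eq_right_of_natDegree_lt h]
  · rw [natDegree_sub_eq_left_of_natDegree_lt h]
    exact h.le

theorem natDegree_radical_pos {c : k[X]} (hc : 0 < c.natDegree) : 0 < (radical c).natDegree := by
  by_contra! h
  have hunit : IsUnit (radical c) := by
    rw [isUnit_iff_degree_eq_zero, degree_eq_natDegree radical_ne_zero]
    exact_mod_cast Nat.le_zero.mp h
  obtain ⟨n, hn⟩ := exists_dvd_radical_self_pow (ne_zero_of_natDegree_gt hc)
  exact hc.ne' (natDegree_eq_zero_of_isUnit (isUnit_of_dvd_unit hn (hunit.pow n)))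

theorem natDegree_radical_pow_mul_pow_mul_le (a b c : k[X]) (n m : ℕ) :
    (radical (a ^ n * b ^ m * c)).natDegree ≤ a.natDegree + b.natDegree + c.natDegree := by
  have hdvd : radical (a ^ n * b ^ m * c) ∣ radical a * radical b * radical c :=
    radical_mul_dvd.trans <| mul_dvd_mul_right
      (radical_mul_dvd.trans (mul_dvd_mul radical_pow_dvd radical_pow_dvd)) _
  calc (radical (a ^ n * b ^ m * c)).natDegree
      ≤ (radical a * radical b * radical c).natDegree := natDegree_le_of_dvd hdvd (by simp)
    _ = (radical a).natDegree + (radical b).natDegree + (radical c).natDegree := by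
      rw [natDegree_mul (by simp) radical_ne_zero, natDegree_mul radical_ne_zero radical_ne_zero]
    _ ≤ a.natDegree + b.natDegree + c.natDegree := by
      gcongr <;> exact natDegree_radical_le

variable [CharZero k]

theorem natDegree_lt_natDegree_radical_of_sub_eq_of_isCoprime {a b c : k[X]}
    (ha : 0 < a.natDegree) (hb : b ≠ 0) (hc : c ≠ 0) (hab : IsCoprime a b) (h : a - b = c) :
    a.natDegree < (radical (a * b * c)).natDegree := by
  have hsum : a + -b + -c = 0 := by rw [← h]; ring
  rcases Polynomial.abc (ne_zero_of_natDegree_gt ha) (neg_ne_zero.mpr hb) (neg_ne_zero.mpr hc)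
    hab.neg_right hsum with ⟨hlt, -, -⟩ | ⟨hder, -, -⟩
  · simpa only [mul_neg, neg_mul, neg_neg, Nat.add_one_le_iff] using hlt
  · exact absurd (derivative_eq_zero.mp hder) ha.ne'

theorem natDegree_lt_natDegree_add_natDegree_radical_of_sub_eq {a b c : k[X]}
    (ha : a ≠ 0) (hb : b ≠ 0) (hc : 0 < c.natDegree) (h : a - b = c) :
    a.natDegree < c.natDegree + (radical (a * b * c)).natDegree := by
  obtain ⟨a₁, b₁, ha', hb', hgcd⟩ := extract_gcd a b
  set g := gcd a b
  have hc₀ : c ≠ 0 := ne_zero_of_natDegree_gt hc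
  have hg : g ≠ 0 := gcd_ne_zero_of_right hb
  have ha₁ : a₁ ≠ 0 := by rintro rfl; exact ha (by rw [ha', mul_zero])
  have hb₁ : b₁ ≠ 0 := by rintro rfl; exact hb (by rw [hb', mul_zero])
  have hc' : c = g * (a₁ - b₁) := by rw [← h, ha', hb']; ring
  have hc₁ : a₁ - b₁ ≠ 0 := by rintro h'; rw [h', mul_zero] at hc'; exact hc₀ hc'
  have habc : a * b * c ≠ 0 := mul_ne_zero (mul_ne_zero ha hb) hc₀
  have hdeg_a : a.natDegree = g.natDegree + a₁.natDegree := by rw [ha', natDegree_mul hg ha₁]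
  have hdeg_g : g.natDegree ≤ c.natDegree := natDegree_le_of_dvd ⟨_, hc'⟩ hc₀
  rcases Nat.eq_zero_or_pos a₁.natDegree with ha₁_const | ha₁_pos
  · have hrad_c : (radical c).natDegree ≤ (radical (a * b * c)).natDegree :=
      natDegree_le_of_dvd (radical_dvd_radical (dvd_mul_left c _) habc) radical_ne_zero
    have := natDegree_radical_pos hc
    omega
  · have hdvd : a₁ * b₁ * (a₁ - b₁) ∣ a * b * c :=
      ⟨g ^ 3, by rw [ha', hb', hc']; ring⟩
    have hrad : (radical (a₁ * b₁ * (a₁ - b₁))).natDegree ≤ (radical (a * b * c)).natDegree :=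
      natDegree_le_of_dvd (radical_dvd_radical hdvd habc) radical_ne_zero
    have := natDegree_lt_natDegree_radical_of_sub_eq_of_isCoprime ha₁_pos hb₁ hc₁
      ((gcd_isUnit_iff _ _).mp hgcd) rfl
    omega

end Polynomial

theorem pillai_case_n_ge_three_mdegq (f p q : ℂ[X]) (n m : ℕ)
    (hf : 1 ≤ f.natDegree) (hn : 3 ≤ n) (hm : 2 ≤ m)
    (hq : 1 ≤ q.natDegree) (hpq : q.natDegree ≤ p.natDegree)
    (heq : p ^ n - q ^ m = f) :
    m * q.natDegree ≤ 3 + 8 * f.natDegree + 4 * f.natDegree ^ 2 := by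
  have hq₀ : q ≠ 0 := ne_zero_of_natDegree_gt hq
  have hp₀ : p ≠ 0 := ne_zero_of_natDegree_gt (hq.trans hpq)
  by_cases hdeg : n * p.natDegree = m * q.natDegree
  · have hlt := natDegree_lt_natDegree_add_natDegree_radical_of_sub_eq
      (pow_ne_zero n hp₀) (pow_ne_zero m hq₀) hf heq
    have hrad := natDegree_radical_pow_mul_pow_mul_le p q f n m
    have hp3 : 3 * p.natDegree ≤ n * p.natDegree := Nat.mul_le_mul_right _ hn
    have hq2 : 2 * q.natDegree ≤ m * q.natDegree := Nat.mul_le_mul_right _ hm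
    rw [natDegree_pow] at hlt
    nlinarith
  · have hle := natDegree_le_natDegree_sub_of_natDegree_ne (a := p ^ n) (b := q ^ m)
      (by rwa [natDegree_pow, natDegree_pow])
    rw [heq, natDegree_pow] at hle
    nlinarith
end

section
/- Let f ∈ ℂ[x] with deg f ≥ 1 and suppose p² − q^m = f for an integer m ≥ 3 and polynomials p, q ∈ ℂ[x] with deg p ≥ deg q ≥ 1. Then (m − 2) · deg q ≤ 2 + 4·deg f; in particular deg q ≤ 2 + 4·deg f and m ≤ 4 + 4·deg f. -/
/-!
Differentiating `f = p ^ 2 - q ^ m` gives `2 p' f - p f' = q ^ (m - 1) (m p q' - 2 p' q)`.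
If the left side is nonzero, `q ^ (m - 1)` divides a polynomial of degree at most
`deg p + deg f`; together with `2 deg p ≤ max (deg f) (m deg q)` this yields
`(m - 2) deg q ≤ 2 deg f`. If it vanishes, comparing leading coefficients in `2 p' f = p f'`
and `m p q' = 2 p' q` gives `m deg q = 2 deg p = deg f`.
-/

open Polynomial

section CommRing

variable {R : Type*} [CommRing R]

theorem C_mul_derivative_mul_pow_sub_pow (p q : R[X]) (n : ℕ) {m : ℕ} (hm : m ≠ 0) :
    C (n : R) * derivative p * (p ^ n - q ^ m) - p * derivative (p ^ n - q ^ m) =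
      q ^ (m - 1) * (C (m : R) * p * derivative q - C (n : R) * derivative p * q) := by
  obtain ⟨m, rfl⟩ := Nat.exists_eq_add_one_of_ne_zero hm
  rcases n with _ | n <;>
    simp only [derivative_sub, derivative_pow_succ, derivative_pow, Nat.cast_succ,
      Nat.cast_zero, map_zero, Nat.add_sub_cancel] <;> ring

theorem natDegree_C_mul_derivative_mul_sub_mul_derivative_le (c : R) (p f : R[X]) :
    (C c * derivative p * f - p * derivative f).natDegree ≤ p.natDegree + f.natDegree := by
  refine (natDegree_sub_le _ _).trans (max_le ?_ ?_)
  · calc (C c * derivative p * f).natDegree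
        ≤ (C c * derivative p).natDegree + f.natDegree := natDegree_mul_le
      _ ≤ p.natDegree + f.natDegree := by
        gcongr
        exact (natDegree_C_mul_le c _).trans ((natDegree_derivative_le p).trans (Nat.sub_le _ _))
  · exact natDegree_mul_le.trans (by gcongr; exact (natDegree_derivative_le f).trans (Nat.sub_le _ _))

end CommRing

section CharZero

variable {R : Type*} [CommRing R] [IsDomain R] [CharZero R]

theorem mul_natDegree_eq_of_C_mul_derivative_mul_eq {p g : R[X]} (hp : p ≠ 0) (hg : g ≠ 0)
    {a b : ℕ} (h : C (a : R) * derivative p * g = C (b : R) * p * derivative g) :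
    a * p.natDegree = b * g.natDegree := by
  have hlc := congrArg leadingCoeff h
  simp only [leadingCoeff_mul, leadingCoeff_C, leadingCoeff_derivative] at hlc
  have : ((a * p.natDegree : ℕ) : R) * (p.leadingCoeff * g.leadingCoeff) =
      ((b * g.natDegree : ℕ) : R) * (p.leadingCoeff * g.leadingCoeff) := by
    push_cast; linear_combination hlc
  exact_mod_cast mul_right_cancel₀ (by simp [hp, hg]) this

theorem sub_two_mul_natDegree_le_of_sq_sub_pow_eq {p q f : R[X]} {m : ℕ} (hm : 2 ≤ m)
    (hf : f ≠ 0) (hq : q ≠ 0) (heq : p ^ 2 - q ^ m = f) :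
    (m - 2) * q.natDegree ≤ 2 * f.natDegree := by
  obtain ⟨k, rfl⟩ := Nat.exists_eq_add_of_le' hm
  rw [Nat.add_sub_cancel]
  rcases eq_or_ne p 0 with rfl | hp
  · have : f.natDegree = (k + 2) * q.natDegree := by simp [← heq]
    rw [this]
    nlinarith
  have key := C_mul_derivative_mul_pow_sub_pow p q 2 (m := k + 2) (by omega)
  rw [heq] at key
  by_cases hW : C ((2 : ℕ) : R) * derivative p * f - p * derivative f = 0
  · have hpf : 2 * p.natDegree = 1 * f.natDegree :=
      mul_natDegree_eq_of_C_mul_derivative_mul_eq hp hf (by simpa [sub_eq_zero] using hW)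
    have hpq : 2 * p.natDegree = (k + 2) * q.natDegree := by
      refine mul_natDegree_eq_of_C_mul_derivative_mul_eq hp hq (Eq.symm ?_)
      rw [hW, eq_comm, mul_eq_zero, sub_eq_zero] at key
      exact key.resolve_left (pow_ne_zero _ hq)
    have : (k + 2) * q.natDegree = k * q.natDegree + 2 * q.natDegree := by ring
    omega
  · have hkq : (k + 1) * q.natDegree ≤ p.natDegree + f.natDegree := by
      calc (k + 1) * q.natDegree = (q ^ (k + 2 - 1)).natDegree := by simp
        _ ≤ _ := natDegree_le_of_dvd ⟨_, key⟩ hW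
        _ ≤ _ := natDegree_C_mul_derivative_mul_sub_mul_derivative_le _ _ _
    have hp2 : 2 * p.natDegree ≤ max f.natDegree ((k + 2) * q.natDegree) := by
      rw [← natDegree_pow, ← natDegree_pow, sub_eq_iff_eq_add.mp heq]
      exact natDegree_add_le _ _
    have h1 : (k + 1) * q.natDegree = k * q.natDegree + q.natDegree := by ring
    have h2 : (k + 2) * q.natDegree = k * q.natDegree + 2 * q.natDegree := by ring
    omega

end CharZero

theorem pillai_case_n_two_m_ge_three_general (f p q : ℂ[X]) (m : ℕ)
    (hf : 1 ≤ f.natDegree) (hm : 3 ≤ m)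
    (hq : 1 ≤ q.natDegree)
    (heq : p ^ 2 - q ^ m = f) :
    (m - 2) * q.natDegree ≤ 2 + 4 * f.natDegree ∧
    q.natDegree ≤ 2 + 4 * f.natDegree ∧ m ≤ 4 + 4 * f.natDegree := by
  have hbound := sub_two_mul_natDegree_le_of_sq_sub_pow_eq (by omega)
    (ne_zero_of_natDegree_gt hf) (ne_zero_of_natDegree_gt hq) heq
  have hq_le : q.natDegree ≤ (m - 2) * q.natDegree := Nat.le_mul_of_pos_left _ (by omega)
  have hm_le : m - 2 ≤ (m - 2) * q.natDegree := Nat.le_mul_of_pos_right _ hq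
  omega

theorem pillai_case_n_two_m_ge_three (f p q : ℂ[X]) (m : ℕ)
    (hf : 1 ≤ f.natDegree) (hm : 3 ≤ m)
    (hq : 1 ≤ q.natDegree) (hpq : q.natDegree ≤ p.natDegree)
    (heq : p ^ 2 - q ^ m = f) :
    (m - 2) * q.natDegree ≤ 2 + 4 * f.natDegree ∧
    q.natDegree ≤ 2 + 4 * f.natDegree ∧ m ≤ 4 + 4 * f.natDegree :=
  pillai_case_n_two_m_ge_three_general f p q m hf hm hq heq
end

section
/- Let T ⊆ ℂ be a finite set and let u₁, …, u_k be non-zero elements of the rational function field ℂ(x) such that for each i, every zero and every pole of u_i in ℂ lies in T (i.e. each u_i is a constant times a product of integer powers of factors (x − α) with α ∈ T). Suppose 1 + u₁ + ⋯ + u_k = 0 and no proper subsum of the left-hand side vanishes. Then max_{i=1,…,k} H(u_i) ≤ (k choose 2) · (|T| + 1). -/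
/-- The (projective) height of a rational function over ℂ:
for `f = p/q` in lowest terms, `H(f) = max (deg p) (deg q)`. -/
noncomputable def ratFuncHeight (f : RatFunc ℂ) : ℕ :=
  max f.num.natDegree f.denom.natDegree

/-!
Clearing denominators turns `1 + u₁ + ⋯ + u_k = 0` into a vanishing sum `F₀ + ⋯ + F_k = 0` of
polynomials with all roots in `T`, without vanishing proper subsums, where `u_i = F_i / F₀`.
Non-degeneracy makes any two indices lie in the support of a common minimal linear relation
(they are in one connected component of the matroid represented by the `F_j`), so `F_i` is a
combination of linearly independent `g₁ = F₀, g₂, …, g_m` (`m ≤ k`) with a nonzero coefficient on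
`g₁`. The Wronskian `W` of the `g_j` is nonzero, and replacing `g₁` by `F_i` only rescales it.
Its degree is at most `∑ deg g_j - C(m,2)`, while at every `α ∈ T` its multiplicity is at least
`∑ ord_α g_j - C(m,2)`; comparing both for the two families bounds the number of poles of
`F_i / F₀`, i.e. `H(u_i)`, by `(|T| - 1) C(m,2)`.
-/

open Polynomial Finset

theorem Fin.sum_val_eq_choose_two (n : ℕ) : ∑ i : Fin n, (i : ℕ) = n.choose 2 := by
  rw [Fin.sum_univ_eq_sum_range (fun i => i), Nat.choose_two_right, ← Finset.sum_range_id_mul_two,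
    Nat.mul_div_cancel _ two_pos]

theorem Fin.sum_le_sum_tsub_val_add_choose_two {n : ℕ} (a : Fin n → ℕ) :
    ∑ i, a i ≤ ∑ i : Fin n, (a i - i) + n.choose 2 := by
  rw [← Fin.sum_val_eq_choose_two, ← sum_add_distrib]
  exact sum_le_sum fun i _ => le_tsub_add

theorem Fin.sum_tsub_val_add_choose_two {n : ℕ} {a : Fin n → ℕ} (h : ∀ i : Fin n, (i : ℕ) ≤ a i) :
    ∑ i : Fin n, (a i - i) + n.choose 2 = ∑ i, a i := by
  rw [← Fin.sum_val_eq_choose_two, ← sum_add_distrib]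
  exact sum_congr rfl fun i _ => Nat.sub_add_cancel (h i)

theorem Finset.sum_comp_update {ι M N : Type*} [DecidableEq ι] [AddCommMonoid N] (s : Finset ι)
    (φ : M → N) (g : ι → M) {ℓ : ι} (hℓ : ℓ ∈ s) (x : M) :
    ∑ i ∈ s, φ (Function.update g ℓ x i) = φ x + ∑ i ∈ s.erase ℓ, φ (g i) := by
  rw [← add_sum_erase s _ hℓ, Function.update_self]
  exact congrArg _ (sum_congr rfl fun i hi => by rw [Function.update_of_ne (ne_of_mem_erase hi)])

namespace Polynomial

variable {R : Type*} [CommRing R] {n : ℕ}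

noncomputable def wronskianMatrix (f : Fin n → R[X]) : Matrix (Fin n) (Fin n) R[X] :=
  Matrix.of fun i j => derivative^[j] (f i)

noncomputable def wronskianDet (f : Fin n → R[X]) : R[X] := (wronskianMatrix f).det

theorem wronskianDet_eq_sum (f : Fin n → R[X]) :
    wronskianDet f = ∑ σ : Equiv.Perm (Fin n),
      (Equiv.Perm.sign σ : R[X]) * ∏ i : Fin n, derivative^[i] (f (σ i)) :=
  Matrix.det_apply' _

theorem wronskianMatrix_linearCombination (A : Matrix (Fin n) (Fin n) R) (f : Fin n → R[X]) :
    wronskianMatrix (fun i => ∑ j, A i j • f j) =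
      (C : R →+* R[X]).mapMatrix A * wronskianMatrix f := by
  ext i j
  simp [wronskianMatrix, Matrix.mul_apply, iterate_derivative_sum, smul_eq_C_mul]

theorem wronskianDet_linearCombination (A : Matrix (Fin n) (Fin n) R) (f : Fin n → R[X]) :
    wronskianDet (fun i => ∑ j, A i j • f j) = C A.det * wronskianDet f := by
  rw [wronskianDet, wronskianMatrix_linearCombination, Matrix.det_mul, ← RingHom.map_det,
    wronskianDet]

theorem wronskianDet_update (f : Fin n → R[X]) (ℓ : Fin n) (c : Fin n → R) :
    wronskianDet (Function.update f ℓ (∑ j, c j • f j)) = C (c ℓ) * wronskianDet f := by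
  have hrow : ∑ k, c k • (1 : Matrix (Fin n) (Fin n) R) k = c := by
    ext j
    simp [Matrix.one_apply]
  have hA : ((1 : Matrix (Fin n) (Fin n) R).updateRow ℓ c).det = c ℓ := by
    simpa [hrow] using Matrix.det_updateRow_sum (1 : Matrix (Fin n) (Fin n) R) ℓ c
  rw [← hA, ← wronskianDet_linearCombination]
  congr 1
  ext i : 1
  rcases eq_or_ne i ℓ with rfl | hi <;> simp [*, Matrix.one_apply]

theorem pow_dvd_wronskianDet (f : Fin n → R[X]) (q : R[X]) (m : Fin n → ℕ)
    (h : ∀ i, q ^ m i ∣ f i) : q ^ (∑ i, m i - n.choose 2) ∣ wronskianDet f := by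
  rw [wronskianDet_eq_sum]
  refine dvd_sum fun σ _ => Dvd.dvd.mul_left ?_ _
  have hσ := Fin.sum_le_sum_tsub_val_add_choose_two (m ∘ σ)
  simp only [Function.comp_apply, Equiv.sum_comp σ m] at hσ
  calc q ^ (∑ i, m i - n.choose 2) ∣ q ^ ∑ i : Fin n, (m (σ i) - i) := pow_dvd_pow q (by omega)
    _ = ∏ i : Fin n, q ^ (m (σ i) - i) := (prod_pow_eq_pow_sum _ _ _).symm
    _ ∣ ∏ i : Fin n, derivative^[i] (f (σ i)) :=
      prod_dvd_prod_of_dvd _ _ fun i _ => pow_sub_dvd_iterate_derivative_of_pow_dvd _ (h _)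

theorem coeff_prod_sum_of_natDegree_le {ι : Type*} (s : Finset ι) (f : ι → R[X]) (e : ι → ℕ)
    (h : ∀ i ∈ s, (f i).natDegree ≤ e i) :
    (∏ i ∈ s, f i).coeff (∑ i ∈ s, e i) = ∏ i ∈ s, (f i).coeff (e i) := by
  classical
  induction s using Finset.induction_on with
  | empty => simp
  | insert a s ha ih =>
    have hs : ∀ i ∈ s, (f i).natDegree ≤ e i := fun i hi => h i (mem_insert_of_mem hi)
    rw [prod_insert ha, sum_insert ha, prod_insert ha, coeff_mul_add_eq_of_natDegree_le
      (h a (mem_insert_self a s)) ((natDegree_prod_le _ _).trans (sum_le_sum hs)), ih hs]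

theorem prod_iterate_derivative_eq_zero_of_lt (f : Fin n → R[X]) {σ : Equiv.Perm (Fin n)}
    {i : Fin n} (hi : (f (σ i)).natDegree < i) : ∏ j : Fin n, derivative^[j] (f (σ j)) = 0 :=
  prod_eq_zero (mem_univ i) (iterate_derivative_eq_zero hi)

theorem natDegree_wronskianDet_add_choose_two_le {f : Fin n → R[X]} (h : wronskianDet f ≠ 0) :
    (wronskianDet f).natDegree + n.choose 2 ≤ ∑ i, (f i).natDegree := by
  have hgood : ∀ σ : Equiv.Perm (Fin n), ∏ i : Fin n, derivative^[i] (f (σ i)) ≠ 0 →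
      ∑ i : Fin n, ((f (σ i)).natDegree - i) + n.choose 2 = ∑ i, (f i).natDegree := by
    intro σ hσ
    rw [Fin.sum_tsub_val_add_choose_two fun i => not_lt.mp fun hi =>
      hσ (prod_iterate_derivative_eq_zero_of_lt f hi)]
    exact Equiv.sum_comp σ fun i => (f i).natDegree
  rw [wronskianDet_eq_sum] at h ⊢
  obtain ⟨σ₀, -, hσ₀⟩ := exists_ne_zero_of_sum_ne_zero h
  have hC := hgood σ₀ (right_ne_zero_of_mul hσ₀)
  suffices hle : (∑ σ : Equiv.Perm (Fin n), (Equiv.Perm.sign σ : R[X]) *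
      ∏ i : Fin n, derivative^[i] (f (σ i))).natDegree ≤ ∑ i, (f i).natDegree - n.choose 2 by
    omega
  refine natDegree_sum_le_of_forall_le _ _ fun σ _ => ?_
  by_cases hσ : ∏ i : Fin n, derivative^[i] (f (σ i)) = 0
  · simp [hσ]
  calc _ ≤ (∏ i : Fin n, derivative^[i] (f (σ i))).natDegree := by
        refine natDegree_mul_le.trans ?_
        rw [natDegree_intCast, zero_add]
    _ ≤ ∑ i : Fin n, ((f (σ i)).natDegree - i) :=
        (natDegree_prod_le _ _).trans (sum_le_sum fun i _ => natDegree_iterate_derivative _ _)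
    _ = _ := by have := hgood σ hσ; omega

theorem coeff_wronskianDet (f : Fin n → R[X]) :
    (wronskianDet f).coeff (∑ i, (f i).natDegree - n.choose 2) =
      (Matrix.of fun i (j : Fin n) =>
        (f i).leadingCoeff * ((f i).natDegree.descFactorial j : R)).det := by
  rw [wronskianDet_eq_sum, Matrix.det_apply', finsetSum_coeff]
  refine sum_congr rfl fun σ _ => ?_
  rw [coeff_intCast_mul]
  congr 1
  by_cases hσ : ∀ i : Fin n, (i : ℕ) ≤ (f (σ i)).natDegree
  · have hN : ∑ i, (f i).natDegree - n.choose 2 = ∑ i : Fin n, ((f (σ i)).natDegree - i) := by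
      rw [← Equiv.sum_comp σ fun i => (f i).natDegree, ← Fin.sum_tsub_val_add_choose_two hσ,
        Nat.add_sub_cancel]
    rw [hN, coeff_prod_sum_of_natDegree_le _ _ _ fun i _ => natDegree_iterate_derivative _ _]
    refine prod_congr rfl fun i _ => ?_
    rw [coeff_iterate_derivative, Nat.sub_add_cancel (hσ i), nsmul_eq_mul, mul_comm]
    rfl
  · obtain ⟨i, hi⟩ := not_forall.mp hσ
    replace hi := not_le.mp hi
    rw [prod_iterate_derivative_eq_zero_of_lt f hi, eq_comm]
    refine prod_eq_zero (mem_univ i) ?_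
    simp [Nat.descFactorial_eq_zero_iff_lt.mpr hi]

theorem wronskianDet_ne_zero_of_injective_natDegree [IsDomain R] [CharZero R] {f : Fin n → R[X]}
    (hf : ∀ i, f i ≠ 0) (hinj : Function.Injective fun i => (f i).natDegree) :
    wronskianDet f ≠ 0 := by
  intro h0
  have hcoeff := coeff_wronskianDet f
  have hvand : (Matrix.of fun i (j : Fin n) => ((f i).natDegree.descFactorial j : R)).det =
      (Matrix.vandermonde fun i => ((f i).natDegree : R)).det := by
    rw [Matrix.det_eval_matrixOfPolynomials_eq_det_vandermonde _ (fun j => descPochhammer R j)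
      (fun j => descPochhammer_natDegree R j) (fun j => monic_descPochhammer R j)]
    simp only [descPochhammer_eval_eq_descFactorial]
  have hfac := Matrix.det_mul_column (fun i => (f i).leadingCoeff)
    (Matrix.of fun i (j : Fin n) => ((f i).natDegree.descFactorial j : R))
  simp only [Matrix.of_apply] at hfac
  rw [h0, coeff_zero, hfac, hvand] at hcoeff
  exact (mul_ne_zero (prod_ne_zero_iff.mpr fun i _ => leadingCoeff_ne_zero.mpr (hf i))
    (Matrix.det_vandermonde_ne_zero_iff.mpr (Nat.cast_injective.comp hinj))) hcoeff.symm

section Field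

variable {K : Type*} [Field K]

theorem exists_injective_natDegree_mem_span {f : Fin n → K[X]} (hf : LinearIndependent K f) :
    ∃ h : Fin n → K[X], (∀ i, h i ≠ 0) ∧ Function.Injective (fun i => (h i).natDegree) ∧
      ∀ i, h i ∈ Submodule.span K (Set.range f) := by
  classical
  set V := Submodule.span K (Set.range f)
  set N := univ.sup fun i => (f i).natDegree
  have hV : ∀ v ∈ V, v.natDegree ≤ N := by
    have : V ≤ degreeLE K N := Submodule.span_le.mpr <| Set.range_subset_iff.mpr fun i =>
      mem_degreeLE.mpr (degree_le_of_natDegree_le (le_sup (f := fun i => (f i).natDegree)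
        (mem_univ i)))
    exact fun v hv => natDegree_le_iff_degree_le.mpr (mem_degreeLE.mp (this hv))
  set E := (range (N + 1)).filter fun e => ∃ v ∈ V, v ≠ 0 ∧ v.natDegree = e
  -- a nonzero `v ∈ V` has a nonzero coefficient at `v.natDegree ∈ E`
  let φ : V →ₗ[K] (E → K) := LinearMap.pi fun e => (lcoeff K e).comp V.subtype
  have hφ : Function.Injective φ := by
    refine (injective_iff_map_eq_zero φ).mpr fun v hv => ?_
    by_contra hv0
    have hvE : (v : K[X]).natDegree ∈ E := mem_filter.mpr ⟨mem_range.mpr (Nat.lt_succ_of_le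
      (hV v v.2)), v, v.2, by simpa using hv0, rfl⟩
    have := congrFun hv ⟨_, hvE⟩
    exact leadingCoeff_ne_zero.mpr (by simpa using hv0) this
  have hcard : Fintype.card (Fin n) ≤ Fintype.card E := by
    rw [← finrank_span_eq_card hf, ← Module.finrank_fintype_fun_eq_card K]
    exact LinearMap.finrank_le_finrank_of_injective hφ
  obtain ⟨emb⟩ := Function.Embedding.nonempty_of_card_le hcard
  choose h hhV hh0 hhdeg using fun i => (mem_filter.mp (emb i).2).2
  refine ⟨h, hh0, fun i j hij => emb.injective (Subtype.ext ?_), hhV⟩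
  simpa [hhdeg] using hij

theorem wronskianDet_ne_zero [CharZero K] {f : Fin n → K[X]} (hf : LinearIndependent K f) :
    wronskianDet f ≠ 0 := by
  obtain ⟨h, h0, hinj, hspan⟩ := exists_injective_natDegree_mem_span hf
  choose A hA using fun i => (Submodule.mem_span_range_iff_exists_fun K).mp (hspan i)
  have hW := wronskianDet_ne_zero_of_injective_natDegree h0 hinj
  have hAh : (fun i => ∑ j, A i j • f j) = h := _root_.funext hA
  rw [← hAh, wronskianDet_linearCombination (A : Matrix (Fin n) (Fin n) K)] at hW
  exact right_ne_zero_of_mul hW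

end Field

section Roots

variable {K : Type*} [Field K] {p : K[X]}

theorem prod_X_sub_C_pow_dvd (T : Finset K) (e : K → ℕ) (h : ∀ α ∈ T, (X - C α) ^ e α ∣ p) :
    ∏ α ∈ T, (X - C α) ^ e α ∣ p :=
  prod_dvd_of_coprime (fun _ _ _ _ hαβ => (pairwise_coprime_X_sub_C Function.injective_id hαβ).pow)
    h

theorem natDegree_prod_X_sub_C_pow (T : Finset K) (e : K → ℕ) :
    (∏ α ∈ T, (X - C α) ^ e α).natDegree = ∑ α ∈ T, e α := by
  rw [natDegree_prod_of_monic _ _ fun α _ => (monic_X_sub_C α).pow _]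
  simp

theorem sum_rootMultiplicity_le_natDegree (hp : p ≠ 0) (T : Finset K) :
    ∑ α ∈ T, rootMultiplicity α p ≤ p.natDegree := by
  rw [← natDegree_prod_X_sub_C_pow]
  exact natDegree_le_of_dvd (prod_X_sub_C_pow_dvd T _ fun α _ => pow_rootMultiplicity_dvd p α) hp

theorem sum_rootMultiplicity_eq_natDegree [IsAlgClosed K] {T : Finset K}
    (hT : ∀ α, p.IsRoot α → α ∈ T) : ∑ α ∈ T, rootMultiplicity α p = p.natDegree := by
  classical
  simp_rw [← count_roots]
  rw [Multiset.sum_count_eq_card fun α hα => hT α (isRoot_of_mem_roots hα),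
    IsAlgClosed.card_roots_eq_natDegree]

theorem sum_rootMultiplicity_le_rootMultiplicity_wronskianDet_add {n : ℕ} {f : Fin n → K[X]}
    (hW : wronskianDet f ≠ 0) (α : K) :
    ∑ i, rootMultiplicity α (f i) ≤ rootMultiplicity α (wronskianDet f) + n.choose 2 := by
  have := (le_rootMultiplicity_iff hW).mpr
    (pow_dvd_wronskianDet f _ _ fun i => pow_rootMultiplicity_dvd (f i) α)
  omega

section Update

variable {m : ℕ} {g : Fin m → K[X]} {c : Fin m → K} {ℓ : Fin m}

theorem natDegree_wronskianDet_add_choose_two_le_min (hW : wronskianDet g ≠ 0) (hc : c ℓ ≠ 0)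
    (hp : ∑ i, c i • g i = p) :
    (wronskianDet g).natDegree + m.choose 2 ≤
      min p.natDegree (g ℓ).natDegree + ∑ i ∈ univ.erase ℓ, (g i).natDegree := by
  have hW' : wronskianDet (Function.update g ℓ p) = C (c ℓ) * wronskianDet g :=
    hp ▸ wronskianDet_update g ℓ c
  have hg := natDegree_wronskianDet_add_choose_two_le hW
  have hp' := natDegree_wronskianDet_add_choose_two_le (hW' ▸ mul_ne_zero (C_ne_zero.mpr hc) hW)
  rw [← add_sum_erase _ _ (mem_univ ℓ)] at hg
  rw [hW', natDegree_C_mul hc, sum_comp_update _ natDegree g (mem_univ ℓ)] at hp'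
  omega

theorem max_rootMultiplicity_add_sum_le_rootMultiplicity_wronskianDet (hW : wronskianDet g ≠ 0)
    (hc : c ℓ ≠ 0) (hp : ∑ i, c i • g i = p) (α : K) :
    max (rootMultiplicity α p) (rootMultiplicity α (g ℓ)) +
        ∑ i ∈ univ.erase ℓ, rootMultiplicity α (g i) ≤
      rootMultiplicity α (wronskianDet g) + m.choose 2 := by
  have hW' : wronskianDet (Function.update g ℓ p) = C (c ℓ) * wronskianDet g :=
    hp ▸ wronskianDet_update g ℓ c
  have hW'0 : C (c ℓ) * wronskianDet g ≠ 0 := mul_ne_zero (C_ne_zero.mpr hc) hW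
  have hg := sum_rootMultiplicity_le_rootMultiplicity_wronskianDet_add hW α
  have hp' := sum_rootMultiplicity_le_rootMultiplicity_wronskianDet_add (hW' ▸ hW'0) α
  rw [← add_sum_erase _ _ (mem_univ ℓ)] at hg
  rw [hW', rootMultiplicity_mul hW'0, rootMultiplicity_C, zero_add,
    sum_comp_update _ (rootMultiplicity α) g (mem_univ ℓ)] at hp'
  omega

theorem max_natDegree_add_choose_two_le_of_linearIndependent [IsAlgClosed K] [CharZero K]
    (T : Finset K) (hg : LinearIndependent K g) (hgT : ∀ i α, (g i).IsRoot α → α ∈ T)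
    (hc : c ℓ ≠ 0) (hp : ∑ i, c i • g i = p) (hpT : ∀ α, p.IsRoot α → α ∈ T) :
    max p.natDegree (g ℓ).natDegree + m.choose 2 ≤
      ∑ α ∈ T, min (rootMultiplicity α p) (rootMultiplicity α (g ℓ)) + T.card * m.choose 2 := by
  have hW := wronskianDet_ne_zero hg
  have hdeg := natDegree_wronskianDet_add_choose_two_le_min hW hc hp
  have hS : ∑ α ∈ T, ∑ i ∈ univ.erase ℓ, rootMultiplicity α (g i) =
      ∑ i ∈ univ.erase ℓ, (g i).natDegree := by
    rw [sum_comm]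
    exact sum_congr rfl fun i _ => sum_rootMultiplicity_eq_natDegree (hgT i)
  have hmax : ∑ α ∈ T, max (rootMultiplicity α p) (rootMultiplicity α (g ℓ)) +
      ∑ i ∈ univ.erase ℓ, (g i).natDegree ≤ (wronskianDet g).natDegree + T.card * m.choose 2 :=
    calc _ = ∑ α ∈ T, (max (rootMultiplicity α p) (rootMultiplicity α (g ℓ)) +
          ∑ i ∈ univ.erase ℓ, rootMultiplicity α (g i)) := by rw [sum_add_distrib, hS]
      _ ≤ ∑ α ∈ T, (rootMultiplicity α (wronskianDet g) + m.choose 2) :=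
          sum_le_sum fun α _ =>
            max_rootMultiplicity_add_sum_le_rootMultiplicity_wronskianDet hW hc hp α
      _ = ∑ α ∈ T, rootMultiplicity α (wronskianDet g) + T.card * m.choose 2 := by
          rw [sum_add_distrib, sum_const, smul_eq_mul]
      _ ≤ _ := add_le_add_left (sum_rootMultiplicity_le_natDegree hW T) _
  have hmin : ∑ α ∈ T, max (rootMultiplicity α p) (rootMultiplicity α (g ℓ)) +
      ∑ α ∈ T, min (rootMultiplicity α p) (rootMultiplicity α (g ℓ)) =
        p.natDegree + (g ℓ).natDegree := by
    rw [← sum_add_distrib, sum_congr rfl fun α _ => max_add_min _ _, sum_add_distrib,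
      sum_rootMultiplicity_eq_natDegree hpT, sum_rootMultiplicity_eq_natDegree (hgT ℓ)]
  generalize T.card * m.choose 2 = B at hmax ⊢
  omega

end Update

end Roots

end Polynomial

theorem ratFuncHeight_div_add_natDegree_le {p q G : ℂ[X]} (hp : p ≠ 0) (hq : q ≠ 0) (hGp : G ∣ p)
    (hGq : G ∣ q) :
    ratFuncHeight (algebraMap ℂ[X] (RatFunc ℂ) p / algebraMap ℂ[X] (RatFunc ℂ) q) + G.natDegree ≤
      max p.natDegree q.natDegree := by
  obtain ⟨p₁, rfl⟩ := hGp
  obtain ⟨q₁, rfl⟩ := hGq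
  obtain ⟨hG, hp₁⟩ := mul_ne_zero_iff.mp hp
  have hq₁ := right_ne_zero_of_mul hq
  rw [map_mul, map_mul, mul_div_mul_left _ _ (RatFunc.algebraMap_ne_zero hG),
    natDegree_mul hG hp₁, natDegree_mul hG hq₁, ratFuncHeight]
  have hnum := natDegree_le_of_dvd (RatFunc.num_div_dvd p₁ hq₁) hp₁
  have hden := natDegree_le_of_dvd (RatFunc.denom_div_dvd p₁ q₁) hq₁
  omega

theorem ratFuncHeight_div_add_sum_min_rootMultiplicity_le {p q : ℂ[X]} (hp : p ≠ 0) (hq : q ≠ 0)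
    (T : Finset ℂ) :
    ratFuncHeight (algebraMap ℂ[X] (RatFunc ℂ) p / algebraMap ℂ[X] (RatFunc ℂ) q) +
      ∑ α ∈ T, min (rootMultiplicity α p) (rootMultiplicity α q) ≤ max p.natDegree q.natDegree := by
  rw [← natDegree_prod_X_sub_C_pow]
  exact ratFuncHeight_div_add_natDegree_le hp hq
    (prod_X_sub_C_pow_dvd T _ fun α _ => (pow_dvd_pow _ (min_le_left _ _)).trans
      (pow_rootMultiplicity_dvd p α))
    (prod_X_sub_C_pow_dvd T _ fun α _ => (pow_dvd_pow _ (min_le_right _ _)).trans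
      (pow_rootMultiplicity_dvd q α))

theorem ratFuncHeight_div_add_choose_two_le (T : Finset ℂ) {m : ℕ} {g : Fin m → ℂ[X]}
    (hg : LinearIndependent ℂ g) (hgT : ∀ i α, (g i).IsRoot α → α ∈ T) {c : Fin m → ℂ}
    {ℓ : Fin m} (hc : c ℓ ≠ 0) {p : ℂ[X]} (hp : ∑ i, c i • g i = p)
    (hpT : ∀ α, p.IsRoot α → α ∈ T) :
    ratFuncHeight (algebraMap ℂ[X] (RatFunc ℂ) p / algebraMap ℂ[X] (RatFunc ℂ) (g ℓ)) +
      m.choose 2 ≤ T.card * m.choose 2 := by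
  have hp0 : p ≠ 0 := by
    rintro rfl
    exact hc (Fintype.linearIndependent_iff.mp hg c hp ℓ)
  have h₁ := ratFuncHeight_div_add_sum_min_rootMultiplicity_le hp0 (hg.ne_zero ℓ) T
  have h₂ := max_natDegree_add_choose_two_le_of_linearIndependent T hg hgT hc hp hpT
  omega

section MinimalRelation

open Finsupp

variable {ι K M : Type*} [Field K] [AddCommGroup M] [Module K M] (v : ι → M)

/-- The supports of minimal relations are the circuits of the matroid represented by `v`. -/
structure IsMinimalRelation (w : ι →₀ K) : Prop where
  mem_ker : w ∈ LinearMap.ker (linearCombination K v)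
  ne_zero : w ≠ 0
  support_subset : ∀ c ∈ LinearMap.ker (linearCombination K v), c ≠ 0 → c.support ⊆ w.support →
    w.support ⊆ c.support

variable {v}

theorem Finsupp.support_sub_div_smul_subset [DecidableEq ι] (c d : ι →₀ K) {e : ι} (he : d e ≠ 0) :
    (c - (c e / d e) • d).support ⊆ (c.support ∪ d.support).erase e := by
  intro i hi
  refine mem_erase.mpr
    ⟨?_, support_sub.trans (union_subset_union subset_rfl Finsupp.support_smul) hi⟩
  rintro rfl
  simp [div_mul_cancel₀ _ he] at hi

theorem exists_isMinimalRelation_of_mem_support {c : ι →₀ K}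
    (hc : c ∈ LinearMap.ker (linearCombination K v)) {j : ι} (hj : j ∈ c.support) :
    ∃ w : ι →₀ K, IsMinimalRelation v w ∧ j ∈ w.support ∧ w.support ⊆ c.support := by
  classical
  induction hn : c.support.card using Nat.strong_induction_on generalizing c with
  | _ n ih =>
  by_cases hmin : IsMinimalRelation v c
  · exact ⟨c, hmin, hj, subset_rfl⟩
  obtain ⟨d, hd, hd0, hdc, hcd⟩ : ∃ d ∈ LinearMap.ker (linearCombination K v), d ≠ 0 ∧
      d.support ⊆ c.support ∧ ¬c.support ⊆ d.support := by
    by_contra! h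
    exact hmin ⟨hc, support_nonempty_iff.mp ⟨j, hj⟩, h⟩
  have hlt : d.support.card < n := hn ▸ card_lt_card ⟨hdc, hcd⟩
  by_cases hjd : j ∈ d.support
  · obtain ⟨w, hw, hjw, hwd⟩ := ih _ hlt hd hjd rfl
    exact ⟨w, hw, hjw, hwd.trans hdc⟩
  -- eliminate a coordinate `e` of `d` from `c`; this keeps `j`
  obtain ⟨e, he⟩ := support_nonempty_iff.mpr hd0
  have hsub : (c - (c e / d e) • d).support ⊆ c.support.erase e :=
    (support_sub_div_smul_subset c d (mem_support_iff.mp he)).trans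
      (erase_subset_erase _ (union_subset subset_rfl hdc))
  have hj' : j ∈ (c - (c e / d e) • d).support := by
    simpa [notMem_support_iff.mp hjd] using hj
  obtain ⟨w, hw, hjw, hwc⟩ := ih _ (hn ▸ (card_le_card hsub).trans_lt
    (card_erase_lt_of_mem (hdc he))) (sub_mem hc (Submodule.smul_mem _ _ hd)) hj' rfl
  exact ⟨w, hw, hjw, hwc.trans (hsub.trans (erase_subset _ _))⟩

namespace IsMinimalRelation

variable {w₁ w₂ : ι →₀ K}

theorem strong_elimination [DecidableEq ι] (hw₁ : IsMinimalRelation v w₁)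
    (hw₂ : IsMinimalRelation v w₂) {y z : ι} (hy₂ : y ∈ w₂.support) (hz₁ : z ∈ w₁.support)
    (hz₂ : z ∉ w₂.support) :
    ∃ w : ι →₀ K, IsMinimalRelation v w ∧ z ∈ w.support ∧
      w.support ⊆ (w₁.support ∪ w₂.support).erase y := by
  have hz : z ∈ (w₁ - (w₁ y / w₂ y) • w₂).support := by
    simpa [notMem_support_iff.mp hz₂] using hz₁
  obtain ⟨w, hw, hzw, hsub⟩ := exists_isMinimalRelation_of_mem_support
    (sub_mem hw₁.mem_ker (Submodule.smul_mem _ _ hw₂.mem_ker)) hz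
  exact ⟨w, hw, hzw, hsub.trans (support_sub_div_smul_subset w₁ w₂ (mem_support_iff.mp hy₂))⟩

theorem exists_mem_mem_of_inter_nonempty [DecidableEq ι] (hw₁ : IsMinimalRelation v w₁)
    (hw₂ : IsMinimalRelation v w₂) {x z : ι} (hx : x ∈ w₁.support) (hz : z ∈ w₂.support)
    (h : (w₁.support ∩ w₂.support).Nonempty) :
    ∃ w : ι →₀ K, IsMinimalRelation v w ∧ x ∈ w.support ∧ z ∈ w.support := by
  induction hn : (w₁.support ∪ w₂.support).card using Nat.strong_induction_on
    generalizing w₁ with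
  | _ n ih =>
  by_cases hz₁ : z ∈ w₁.support
  · exact ⟨w₁, hw₁, hx, hz₁⟩
  obtain ⟨y, hy⟩ := h
  obtain ⟨hy₁, hy₂⟩ := mem_inter.mp hy
  obtain ⟨w₃, hw₃, hz₃, h₃⟩ := hw₂.strong_elimination hw₁ hy₁ hz hz₁
  by_cases hx₃ : x ∈ w₃.support
  · exact ⟨w₃, hw₃, hx₃, hz₃⟩
  -- otherwise `w₃` would be a relation strictly inside the minimal `w₂`
  obtain ⟨t, ht₃, ht₁, ht₂⟩ : ∃ t ∈ w₃.support, t ∈ w₁.support ∧ t ∉ w₂.support := by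
    by_contra! hne
    have h32 : w₃.support ⊆ w₂.support := fun i hi =>
      (mem_union.mp (mem_of_mem_erase (h₃ hi))).elim id fun hi₁ => hne i hi hi₁
    exact notMem_erase y _ (h₃ (hw₂.support_subset w₃ hw₃.mem_ker hw₃.ne_zero h32 hy₂))
  obtain ⟨w₄, hw₄, hx₄, h₄⟩ := hw₁.strong_elimination hw₃ ht₃ hx hx₃
  -- otherwise `w₄` would be a relation strictly inside the minimal `w₁`
  have h42 : (w₄.support ∩ w₂.support).Nonempty := by
    by_contra hne
    have h41 : w₄.support ⊆ w₁.support := fun i hi =>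
      (mem_union.mp (mem_of_mem_erase (h₄ hi))).elim id fun hi₃ => by
        by_contra hi₁
        have hi₂ := (mem_union.mp (mem_of_mem_erase (h₃ hi₃))).resolve_right hi₁
        exact hne ⟨i, mem_inter.mpr ⟨hi, hi₂⟩⟩
    exact notMem_erase t _ (h₄ (hw₁.support_subset w₄ hw₄.mem_ker hw₄.ne_zero h41 ht₁))
  have hsub : w₄.support ∪ w₂.support ⊆ (w₁.support ∪ w₂.support).erase t := by
    refine union_subset (fun i hi => ?_) fun i hi => mem_erase.mpr ⟨?_, mem_union_right _ hi⟩
    · obtain ⟨hit, hi'⟩ := mem_erase.mp (h₄ hi)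
      refine mem_erase.mpr ⟨hit, (mem_union.mp hi').elim (mem_union_left _) fun hi₃ => ?_⟩
      exact (mem_union.mp (mem_of_mem_erase (h₃ hi₃))).elim (mem_union_right _) (mem_union_left _)
    · rintro rfl; exact ht₂ hi
  exact ih _ (hn ▸ (card_le_card hsub).trans_lt (card_erase_lt_of_mem (mem_union_left _ ht₁)))
    hw₄ hx₄ h42 rfl

end IsMinimalRelation

theorem filter_mem_ker_of_forall_isMinimalRelation {p : ι → Prop} [DecidablePred p]
    (hp : ∀ w : ι →₀ K, IsMinimalRelation v w → ∀ i ∈ w.support, p i → ∀ j ∈ w.support, p j)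
    {c : ι →₀ K} (hc : c ∈ LinearMap.ker (linearCombination K v)) :
    c.filter p ∈ LinearMap.ker (linearCombination K v) := by
  classical
  induction hn : c.support.card using Nat.strong_induction_on generalizing c with
  | _ n ih =>
  rcases eq_or_ne c 0 with rfl | hc0
  · rw [filter_zero]; exact zero_mem _
  obtain ⟨j, hj⟩ := support_nonempty_iff.mpr hc0
  obtain ⟨w, hw, hjw, hwc⟩ := exists_isMinimalRelation_of_mem_support hc hj
  have hwp : w.filter p ∈ LinearMap.ker (linearCombination K v) := by
    by_cases hpw : ∃ i ∈ w.support, p i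
    · obtain ⟨i, hi, hpi⟩ := hpw
      rw [(filter_eq_self_iff p w).mpr fun x hx => hp w hw i hi hpi x (mem_support_iff.mpr hx)]
      exact hw.mem_ker
    · rw [(filter_eq_zero_iff p w).mpr fun x hx =>
        notMem_support_iff.mp fun hxs => hpw ⟨x, hxs, hx⟩]
      exact zero_mem _
  have hsub : (c - (c j / w j) • w).support ⊆ c.support.erase j :=
    (support_sub_div_smul_subset c w (mem_support_iff.mp hjw)).trans
      (erase_subset_erase _ (union_subset subset_rfl hwc))
  have hc' := ih _ (hn ▸ (card_le_card hsub).trans_lt (card_erase_lt_of_mem hj))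
    (sub_mem hc (Submodule.smul_mem _ _ hw.mem_ker)) rfl
  have hsplit : c.filter p = (c - (c j / w j) • w).filter p + (c j / w j) • w.filter p := by
    rw [filter_sub, filter_smul, sub_add_cancel]
  rw [hsplit]
  exact add_mem hc' (Submodule.smul_mem _ _ hwp)

theorem exists_isMinimalRelation_mem_mem_of_sum_eq_zero [Fintype ι] (hsum : ∑ i, v i = 0)
    (hsub : ∀ s : Finset ι, s.Nonempty → s ≠ univ → ∑ i ∈ s, v i ≠ 0) (a b : ι) :
    ∃ w : ι →₀ K, IsMinimalRelation v w ∧ a ∈ w.support ∧ b ∈ w.support := by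
  classical
  let one : ι →₀ K := equivFunOnFinite.symm 1
  have hone : ∀ (p : ι → Prop) [DecidablePred p],
      linearCombination K v (one.filter p) = ∑ i ∈ univ.filter p, v i := by
    intro p _
    simp [one, linearCombination_apply, Finsupp.sum_fintype, sum_filter, filter_apply, ite_smul]
  have hker : one ∈ LinearMap.ker (linearCombination K v) := by
    simp [one, linearCombination_apply, Finsupp.sum_fintype, hsum]
  let p : ι → Prop := fun i => ∃ w : ι →₀ K, IsMinimalRelation v w ∧ a ∈ w.support ∧ i ∈ w.support
  have hp : ∀ w : ι →₀ K, IsMinimalRelation v w → ∀ i ∈ w.support, p i → ∀ j ∈ w.support, p j :=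
    fun w hw i hi ⟨w', hw', ha', hi'⟩ j hj =>
      hw'.exists_mem_mem_of_inter_nonempty hw ha' hj ⟨i, mem_inter.mpr ⟨hi', hi⟩⟩
  have ha : p a := by
    obtain ⟨w, hw, haw, -⟩ :=
      exists_isMinimalRelation_of_mem_support hker (by simp [one] : a ∈ one.support)
    exact ⟨w, hw, haw, haw⟩
  have hpuniv : univ.filter p = univ := by
    by_contra hne
    refine hsub _ ⟨a, mem_filter.mpr ⟨mem_univ a, ha⟩⟩ hne ?_
    rw [← hone]
    exact filter_mem_ker_of_forall_isMinimalRelation hp hker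
  have hb : p b := (mem_filter.mp (hpuniv.symm ▸ mem_univ b)).2
  exact hb

theorem IsMinimalRelation.exists_linearIndependent_sum_eq [DecidableEq ι] {w : ι →₀ K}
    (hw : IsMinimalRelation v w) {a b : ι} (ha : a ∈ w.support) (hb : b ∈ w.support)
    (hab : a ≠ b) :
    ∃ (m : ℕ) (e : Fin m → ι) (c : Fin m → K) (ℓ : Fin m), m < w.support.card ∧
      LinearIndependent K (v ∘ e) ∧ e ℓ = a ∧ c ℓ ≠ 0 ∧ ∑ i, c i • v (e i) = v b := by
  set J := w.support.erase b
  have hJ : LinearIndepOn K v (J : Set ι) := by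
    refine linearIndepOn_iff.mpr fun l hl hl0 => ?_
    by_contra hne
    have hlJ : l.support ⊆ J := by simpa using (mem_supported K l).mp hl
    exact notMem_erase b _ (hlJ (hw.support_subset l hl0 hne (hlJ.trans (erase_subset _ _)) hb))
  have hb0 : w b ≠ 0 := mem_support_iff.mp hb
  have hrel : w b • v b + ∑ i ∈ J, w i • v i = 0 := by
    rw [add_sum_erase _ (fun i => w i • v i) hb]
    simpa [linearCombination_apply, Finsupp.sum] using hw.mem_ker
  let e : Fin J.card → ι := fun i => J.equivFin.symm i
  have haJ : a ∈ J := mem_erase.mpr ⟨hab, ha⟩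
  refine ⟨J.card, e, fun i => -(w (e i) / w b), J.equivFin ⟨a, haJ⟩, card_erase_lt_of_mem hb,
    hJ.comp _ J.equivFin.symm.injective, by simp [e], by simp [e, mem_support_iff.mp ha, hb0], ?_⟩
  calc ∑ i, -(w (e i) / w b) • v (e i) = ∑ i ∈ J, -(w i / w b) • v i := by
        rw [← sum_coe_sort J]
        exact Equiv.sum_comp J.equivFin.symm fun i : J => -(w i / w b) • v i
    _ = -(w b)⁻¹ • ∑ i ∈ J, w i • v i := by
        rw [Finset.smul_sum]
        exact sum_congr rfl fun i _ => by rw [smul_smul, neg_mul, div_eq_inv_mul]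
    _ = v b := by
        rw [eq_neg_of_add_eq_zero_right hrel, smul_neg, neg_smul, neg_neg, smul_smul,
          inv_mul_cancel₀ hb0, one_smul]

end MinimalRelation

theorem RatFunc.exists_algebraMap_eq_cons_mul {K : Type*} [Field K] {k : ℕ}
    (u : Fin k → RatFunc K) :
    ∃ (F : Fin (k + 1) → K[X]) (D : K[X]), D ≠ 0 ∧
      (∀ j, algebraMap K[X] (RatFunc K) (F j) =
        Fin.cons (α := fun _ => RatFunc K) 1 u j * algebraMap K[X] (RatFunc K) D) ∧
      ∀ j, F j ∣ ∏ i, (u i).num * (u i).denom := by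
  refine ⟨Fin.cons (∏ i, (u i).denom) fun i => (u i).num * ∏ j ∈ univ.erase i, (u j).denom,
    ∏ i, (u i).denom, prod_ne_zero_iff.mpr fun i _ => (u i).denom_ne_zero, fun j => ?_,
    fun j => ?_⟩
  · refine Fin.cases (by simp) (fun i => ?_) j
    have hnum : algebraMap K[X] (RatFunc K) (u i).num =
        u i * algebraMap K[X] (RatFunc K) (u i).denom := by
      rw [← div_eq_iff (RatFunc.algebraMap_ne_zero (u i).denom_ne_zero), RatFunc.num_div_denom]
    simp only [Fin.cons_succ, map_mul, map_prod, hnum, ← mul_prod_erase univ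
      (fun j => algebraMap K[X] (RatFunc K) (u j).denom) (mem_univ i)]
    ring
  · refine Fin.cases (prod_dvd_prod_of_dvd _ _ fun i _ => dvd_mul_left _ _) (fun i => ?_) j
    rw [Fin.cons_succ, ← mul_prod_erase _ _ (mem_univ i)]
    exact mul_dvd_mul (dvd_mul_right _ _) (prod_dvd_prod_of_dvd _ _ fun j _ => dvd_mul_left _ _)

theorem RatFunc.sum_eq_zero_iff_of_algebraMap_eq_mul {K ι : Type*} [Field K] {F : ι → K[X]}
    {f : ι → RatFunc K} {D : K[X]} (hD : D ≠ 0)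
    (h : ∀ j, algebraMap K[X] (RatFunc K) (F j) = f j * algebraMap K[X] (RatFunc K) D)
    (S : Finset ι) : ∑ j ∈ S, F j = 0 ↔ ∑ j ∈ S, f j = 0 := by
  rw [← (IsFractionRing.injective K[X] (RatFunc K)).eq_iff, map_sum, map_zero,
    sum_congr rfl fun j _ => h j, ← sum_mul, mul_eq_zero,
    or_iff_left (RatFunc.algebraMap_ne_zero hD)]

theorem brownawell_masser_ratFunc_general (k : ℕ) (T : Finset ℂ) (u : Fin k → RatFunc ℂ)
    (hT : ∀ i, ∀ α : ℂ, α ∉ T →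
      (RatFunc.num (u i)).eval α ≠ 0 ∧ (RatFunc.denom (u i)).eval α ≠ 0)
    (hsum : 1 + ∑ i, u i = 0)
    (hsub : ∀ s : Finset (Fin (k + 1)), s.Nonempty → s ≠ Finset.univ →
      ∑ i ∈ s, Fin.cons 1 u i ≠ 0) :
    ∀ i, ratFuncHeight (u i) ≤ Nat.choose k 2 * (T.card + 1) := by
  intro i
  obtain ⟨F, D, hD, hFD, hdvd⟩ := RatFunc.exists_algebraMap_eq_cons_mul u
  have hF := RatFunc.sum_eq_zero_iff_of_algebraMap_eq_mul hD hFD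
  have hFT : ∀ j α, (F j).IsRoot α → α ∈ T := fun j α hα => by
    by_contra hαT
    have h := hα.dvd (hdvd j)
    rw [IsRoot, eval_prod] at h
    obtain ⟨i, -, hi⟩ := prod_eq_zero_iff.mp h
    exact mul_ne_zero (hT i α hαT).1 (hT i α hαT).2 (by rwa [eval_mul] at hi)
  obtain ⟨w, hw, h₀, hᵢ⟩ := exists_isMinimalRelation_mem_mem_of_sum_eq_zero (K := ℂ)
    ((hF univ).mpr (by rwa [Fin.sum_cons])) (fun s hs hsu => (hF s).not.mpr (hsub s hs hsu))
    0 i.succ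
  obtain ⟨m, e, c, ℓ, hm, hli, heℓ, hcℓ, hrep⟩ :=
    hw.exists_linearIndependent_sum_eq h₀ hᵢ (Fin.succ_ne_zero i).symm
  have hH := ratFuncHeight_div_add_choose_two_le T hli (fun j => hFT (e j)) hcℓ hrep (hFT _)
  rw [Function.comp_apply, heℓ, hFD, hFD, Fin.cons_succ, Fin.cons_zero, one_mul,
    mul_div_cancel_right₀ _ (RatFunc.algebraMap_ne_zero hD)] at hH
  have hmk : m.choose 2 ≤ k.choose 2 :=
    Nat.choose_le_choose 2 (by simpa using hm.trans_le (card_le_univ w.support))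
  calc ratFuncHeight (u i) ≤ T.card * m.choose 2 := by omega
    _ ≤ k.choose 2 * (T.card + 1) := by nlinarith

/-- Brownawell–Masser over the genus-0 field ℂ(x): if `1 + u₁ + ⋯ + u_k = 0`
with no vanishing proper subsum, and all zeros and poles of each `uᵢ` lie in the
finite set `T ⊆ ℂ`, then `H(uᵢ) ≤ (k choose 2) * (|T| + 1)`. -/
theorem brownawell_masser_ratFunc (k : ℕ) (T : Finset ℂ) (u : Fin k → RatFunc ℂ)
    (hu : ∀ i, u i ≠ 0)
    (hT : ∀ i, ∀ α : ℂ, α ∉ T →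
      (RatFunc.num (u i)).eval α ≠ 0 ∧ (RatFunc.denom (u i)).eval α ≠ 0)
    (hsum : 1 + ∑ i, u i = 0)
    (hsub : ∀ s : Finset (Fin (k + 1)), s.Nonempty → s ≠ Finset.univ →
      ∑ i ∈ s, Fin.cons 1 u i ≠ 0) :
    ∀ i, ratFuncHeight (u i) ≤ Nat.choose k 2 * (T.card + 1) :=
  brownawell_masser_ratFunc_general k T u hT hsum hsub
end
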